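/- arXiv:1012.4079 — 3 statements merged into one kernel-verified Lean document; each statement's English description precedes it below -/
import Mathlib

section
/- Let G be a finite group and H a finite abelian group. If f: G → H is perfect nonlinear, then for every irreducible unitary representation ρ: G → U(V) of G and every nontrivial β ∈ H, the Hilbert–Schmidt norm satisfies ‖Σ_{x∈G} χ_β(f(x)) ρ(x)‖² = |G| · dim(V), where ‖λ‖² = tr(λ ∘ λ*). -/
/-!
Unitarity gives `ρ(x)* = ρ(x⁻¹)`, so for `c = χ_β ∘ f` the operator `(∑ c(x) ρ(x)) (∑ c(y) ρ(y))*`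
equals `∑_α (∑_y c(αy) conj c(y)) ρ(α)`. As `χ_β` takes values in roots of unity, the coefficient of
`ρ(α)` is the character sum `∑_y χ_β(f(αy) f(y)⁻¹)` over the derivative `d_α f`. For `α ≠ 1` this
derivative is balanced, so the sum vanishes because `χ_β` is nontrivial; only `α = 1` survives and
contributes `|G| · tr(id) = |G| · dim V`.
-/

/-- `f` is balanced: every fiber has cardinality `|X| / |H|`. -/
def IsBalanced {X H : Type} [Fintype X] [Fintype H] (f : X → H) : Prop :=
  ∀ y : H, Nat.card {x : X // f x = y} * Fintype.card H = Fintype.card X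

/-- `f : G → H` is perfect nonlinear: every nontrivial left derivative is balanced. -/
def IsPerfectNonlinear {G H : Type} [Group G] [Fintype G] [Group H] [Fintype H]
    (f : G → H) : Prop :=
  ∀ α : G, α ≠ 1 → IsBalanced (fun x : G => f (α * x) * (f x)⁻¹)

open ComplexConjugate

lemma MonoidHom.conj_apply_eq_apply_inv {H : Type} [Group H] [Fintype H] (φ : H →* ℂ) (h : H) :
    conj (φ h) = φ h⁻¹ := by
  have hpow : φ h ^ Fintype.card H = 1 := by rw [← map_pow, pow_card_eq_one, map_one]
  rw [φ.map_inv, Complex.inv_eq_conj (Complex.norm_eq_one_of_pow_eq_one hpow Fintype.card_ne_zero)]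

namespace IsBalanced

variable {X H : Type} [Fintype X] [Fintype H] {g : X → H}

lemma card_smul_sum_comp {M : Type} [AddCommMonoid M] (hg : IsBalanced g) (F : H → M) :
    Fintype.card H • ∑ x, F (g x) = Fintype.card X • ∑ y, F y := by
  classical
  rw [← Finset.sum_fiberwise Finset.univ g, Finset.smul_sum, Finset.smul_sum]
  refine Finset.sum_congr rfl fun y _ => ?_
  rw [Finset.sum_congr rfl fun x hx => congrArg F (Finset.mem_filter.mp hx).2, Finset.sum_const,
    smul_smul, ← hg y, mul_comm, Nat.card_eq_fintype_card, Fintype.card_subtype]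

lemma sum_monoidHom_comp_eq_zero [Group H] (hg : IsBalanced g) {φ : H →* ℂ} (hφ : φ ≠ 1) :
    ∑ x, φ (g x) = 0 := by
  have h := hg.card_smul_sum_comp φ
  rw [sum_hom_units_eq_zero φ hφ, smul_zero, nsmul_eq_mul, mul_eq_zero] at h
  exact h.resolve_left (Nat.cast_ne_zero.mpr Fintype.card_ne_zero)

end IsBalanced

section Unitary

variable {G V : Type} [Group G] [NormedAddCommGroup V] [InnerProductSpace ℂ V]
  [FiniteDimensional ℂ V] {ρ : Representation ℂ G V}

lemma Representation.adjoint_eq_inv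
    (hρ : ∀ (g : G) (u v : V), (inner ℂ (ρ g u) (ρ g v) : ℂ) = inner ℂ u v) (g : G) :
    LinearMap.adjoint (ρ g) = ρ g⁻¹ := by
  refine ((LinearMap.eq_adjoint_iff _ _).mpr fun u v => ?_).symm
  rw [← hρ g, Representation.self_inv_apply]

variable [Fintype G]

lemma Representation.sum_smul_comp_adjoint_sum_smul
    (hρ : ∀ (g : G) (u v : V), (inner ℂ (ρ g u) (ρ g v) : ℂ) = inner ℂ u v) (a b : G → ℂ) :
    (∑ x, a x • ρ x) ∘ₗ LinearMap.adjoint (∑ y, b y • ρ y)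
      = ∑ α, (∑ y, a (α * y) * conj (b y)) • ρ α := by
  simp only [map_sum, LinearMap.adjoint.map_smulₛₗ, Representation.adjoint_eq_inv hρ,
    ← Module.End.mul_eq_comp, Finset.sum_mul_sum, Finset.sum_smul]
  rw [Finset.sum_comm]
  conv_rhs => rw [Finset.sum_comm]
  refine Finset.sum_congr rfl fun y _ => (Fintype.sum_equiv (Equiv.mulRight y) _ _ fun α => ?_).symm
  rw [Equiv.coe_mulRight, smul_mul_smul_comm, ← map_mul, mul_inv_cancel_right]

lemma Representation.trace_sum_smul_comp_adjoint_sum_smul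
    (hρ : ∀ (g : G) (u v : V), (inner ℂ (ρ g u) (ρ g v) : ℂ) = inner ℂ u v) (a b : G → ℂ) :
    LinearMap.trace ℂ V ((∑ x, a x • ρ x) ∘ₗ LinearMap.adjoint (∑ y, b y • ρ y))
      = ∑ α, (∑ y, a (α * y) * conj (b y)) * LinearMap.trace ℂ V (ρ α) := by
  rw [Representation.sum_smul_comp_adjoint_sum_smul hρ, map_sum]
  simp only [map_smul, smul_eq_mul]

end Unitary

theorem stmt13_general {G H : Type} [Group G] [Fintype G] [CommGroup H] [Fintype H]
    (χ : H ≃* (H →* ℂ)) (f : G → H)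
    (hf : IsPerfectNonlinear f)
    {V : Type} [NormedAddCommGroup V] [InnerProductSpace ℂ V] [FiniteDimensional ℂ V]
    (ρ : Representation ℂ G V)
    (hunitary : ∀ (g : G) (u v : V), (inner ℂ (ρ g u) (ρ g v) : ℂ) = inner ℂ u v)
    (β : H) (hβ : β ≠ 1) :
    LinearMap.trace ℂ V
        ((∑ x : G, χ β (f x) • ρ x) ∘ₗ LinearMap.adjoint (∑ x : G, χ β (f x) • ρ x))
      = (Fintype.card G : ℂ) * (Module.finrank ℂ V : ℂ) := by
  have hχβ : χ β ≠ 1 := (map_ne_one_iff χ χ.injective).mpr hβ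
  rw [ρ.trace_sum_smul_comp_adjoint_sum_smul hunitary, Fintype.sum_eq_single 1 fun α hα => ?_]
  · simp only [one_mul, MonoidHom.conj_apply_eq_apply_inv, ← map_mul, mul_inv_cancel, map_one,
      Finset.sum_const, Finset.card_univ, nsmul_eq_mul, mul_one, LinearMap.trace_one]
  · simp only [MonoidHom.conj_apply_eq_apply_inv, ← map_mul]
    rw [(hf α hα).sum_monoidHom_comp_eq_zero hχβ, zero_mul]

theorem stmt13 {G H : Type} [Group G] [Fintype G] [CommGroup H] [Fintype H]
    (χ : H ≃* (H →* ℂ)) (f : G → H)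
    (hf : IsPerfectNonlinear f)
    {V : Type} [NormedAddCommGroup V] [InnerProductSpace ℂ V] [FiniteDimensional ℂ V]
    (ρ : Representation ℂ G V)
    (hirr : Nontrivial V ∧
      ∀ U : Submodule ℂ V, (∀ (g : G) (v : V), v ∈ U → ρ g v ∈ U) → U = ⊥ ∨ U = ⊤)
    (hunitary : ∀ (g : G) (u v : V), (inner ℂ (ρ g u) (ρ g v) : ℂ) = inner ℂ u v)
    (β : H) (hβ : β ≠ 1) :
    LinearMap.trace ℂ V
        ((∑ x : G, χ β (f x) • ρ x) ∘ₗ LinearMap.adjoint (∑ x : G, χ β (f x) • ρ x))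
      = (Fintype.card G : ℂ) * (Module.finrank ℂ V : ℂ) :=
  stmt13_general χ f hf ρ hunitary β hβ
end

section
/- Let G be a finite abelian group and H a finite group. If f: G → H is perfect nonlinear, then for every α ∈ G and every nontrivial irreducible unitary representation ρ: H → U(W), we have tr(S(α) ∘ S(α)*) = |G| · dim(W), where S(α) = Σ_{x∈G} χ_α(x) ρ(f(x)). -/
/-!
Unitarity gives `S(α)* = ∑ y, χ_α(y⁻¹) ρ(f y)⁻¹`, and substituting `x = β y` turns `S(α) S(α)*` into
`∑ β, χ_α(β) ∑ y, ρ(f(β y) f(y)⁻¹)`. For `β ≠ 1` the derivative `y ↦ f(β y) f(y)⁻¹` is balanced, so the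
inner sum is `|G|/|H| ∑ h, ρ h`, which vanishes: its image consists of invariant vectors, and a
nontrivial irreducible representation has none. Hence `S(α) S(α)* = |G| • 1`.
-/

open Finset

lemma IsBalanced.sum_comp {X H : Type} {M : Type*} [Fintype X] [Fintype H] [AddCommMonoid M]
    {g : X → H} (hg : IsBalanced g) (F : H → M) :
    ∑ x, F (g x) = (Fintype.card X / Fintype.card H) • ∑ h, F h := by
  classical
  rw [← Fintype.sum_fiberwise' g F, smul_sum]
  refine sum_congr rfl fun h _ => ?_
  rw [sum_const, card_univ, ← Nat.card_eq_fintype_card,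
    Nat.eq_div_of_mul_eq_left (Fintype.card_pos_iff.2 ⟨h⟩).ne' (hg h)]

lemma MonoidHom.conj_apply_eq_apply_inv_s16 {G : Type*} [Group G] [Finite G] (ψ : G →* ℂ) (x : G) :
    starRingEnd ℂ (ψ x) = ψ x⁻¹ := by
  have hnorm : ‖ψ x‖ = 1 :=
    Complex.norm_eq_one_of_pow_eq_one (by rw [← map_pow, pow_card_eq_one', map_one])
      Nat.card_pos.ne'
  rw [← Complex.inv_eq_conj hnorm, map_inv]

namespace Representation

section Invariants

variable {k G V : Type*} [CommRing k] [Group G] [AddCommGroup V] [Module k V]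
  (ρ : Representation k G V)

lemma invariants_ne_top (hρ : ρ ≠ 1) : ρ.invariants ≠ ⊤ := fun htop =>
  hρ <| MonoidHom.ext fun g => LinearMap.ext fun v =>
    (ρ.mem_invariants v).1 (htop ▸ Submodule.mem_top) g

lemma apply_mem_invariants (g : G) {v : V} (hv : v ∈ ρ.invariants) : ρ g v ∈ ρ.invariants := by
  rwa [hv g]

lemma sum_apply_mem_invariants [Fintype G] (v : V) : (∑ g, ρ g) v ∈ ρ.invariants := fun h => by
  simp only [LinearMap.sum_apply, map_sum, ← Module.End.mul_apply, ← map_mul]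
  exact Fintype.sum_equiv (Equiv.mulLeft h) _ _ fun _ => rfl

lemma sum_eq_zero_of_invariants_eq_bot [Fintype G] (h : ρ.invariants = ⊥) : ∑ g, ρ g = 0 :=
  LinearMap.ext fun v => (Submodule.mem_bot k).1 (h ▸ ρ.sum_apply_mem_invariants v)

lemma sum_eq_zero_of_irreducible [Fintype G]
    (hirr : ∀ U : Submodule k V, (∀ (g : G) (w : V), w ∈ U → ρ g w ∈ U) → U = ⊥ ∨ U = ⊤)
    (hρ : ρ ≠ 1) : ∑ g, ρ g = 0 :=
  ρ.sum_eq_zero_of_invariants_eq_bot <|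
    (hirr _ fun g _ hv => ρ.apply_mem_invariants g hv).resolve_right (ρ.invariants_ne_top hρ)

end Invariants

lemma adjoint_eq_inv_s16 {𝕜 G V : Type*} [RCLike 𝕜] [Group G] [NormedAddCommGroup V]
    [InnerProductSpace 𝕜 V] [FiniteDimensional 𝕜 V] (ρ : Representation 𝕜 G V)
    (hρ : ∀ (g : G) (u v : V), inner 𝕜 (ρ g u) (ρ g v) = inner 𝕜 u v) (g : G) :
    LinearMap.adjoint (ρ g) = ρ g⁻¹ :=
  ((LinearMap.eq_adjoint_iff _ _).2 fun u v => by rw [← hρ g, self_inv_apply]).symm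

end Representation

section TwistedSums

variable {k A G H : Type*} [CommSemiring k] [Semiring A] [Algebra k A] [Group G] [Fintype G]
  [Group H]

lemma sum_smul_mul_sum_smul_inv (ψ : G →* k) (ρ : H →* A) (f : G → H) :
    (∑ x, ψ x • ρ (f x)) * (∑ y, ψ y⁻¹ • ρ (f y)⁻¹) =
      ∑ β, ψ β • ∑ y, ρ (f (β * y) * (f y)⁻¹) := by
  rw [sum_mul_sum, sum_comm]
  simp only [smul_sum]
  conv_rhs => rw [sum_comm]
  refine sum_congr rfl fun y _ => ?_
  rw [← Equiv.sum_comp (Equiv.mulRight y)]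
  refine sum_congr rfl fun β _ => ?_
  rw [smul_mul_smul_comm, ← map_mul ρ, ← map_mul ψ, Equiv.coe_mulRight, mul_inv_cancel_right]

lemma IsPerfectNonlinear.sum_smul_mul_sum_smul_inv {G H : Type} [Group G] [Fintype G] [Group H]
    [Fintype H] {f : G → H} (hf : IsPerfectNonlinear f) (ψ : G →* k) (ρ : H →* A)
    (hρ : ∑ h, ρ h = 0) :
    (∑ x, ψ x • ρ (f x)) * (∑ y, ψ y⁻¹ • ρ (f y)⁻¹) = Fintype.card G • 1 := by
  rw [_root_.sum_smul_mul_sum_smul_inv, sum_eq_single 1]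
  · simp
  · intro β _ hβ
    rw [IsBalanced.sum_comp (hf β hβ) ρ, hρ, smul_zero, smul_zero]
  · exact fun h => absurd (mem_univ 1) h

end TwistedSums

theorem stmt16 {G H : Type} [CommGroup G] [Fintype G] [Group H] [Fintype H]
    (χ : G ≃* (G →* ℂ)) (f : G → H)
    (hf : IsPerfectNonlinear f)
    {W : Type} [NormedAddCommGroup W] [InnerProductSpace ℂ W] [FiniteDimensional ℂ W]
    (ρ : Representation ℂ H W)
    (hirr : Nontrivial W ∧
      ∀ U : Submodule ℂ W, (∀ (h : H) (w : W), w ∈ U → ρ h w ∈ U) → U = ⊥ ∨ U = ⊤)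
    (hunitary : ∀ (h : H) (u v : W), (inner ℂ (ρ h u) (ρ h v) : ℂ) = inner ℂ u v)
    (hρ : ρ ≠ 1) (α : G) :
    LinearMap.trace ℂ W
        ((∑ x : G, χ α x • ρ (f x)) ∘ₗ LinearMap.adjoint (∑ x : G, χ α x • ρ (f x)))
      = (Fintype.card G : ℂ) * (Module.finrank ℂ W : ℂ) := by
  have hadj : LinearMap.adjoint (∑ x : G, χ α x • ρ (f x)) = ∑ y : G, χ α y⁻¹ • ρ (f y)⁻¹ := by
    simp only [map_sum, LinearMap.adjoint.map_smulₛₗ, MonoidHom.conj_apply_eq_apply_inv_s16,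
      ρ.adjoint_eq_inv_s16 hunitary]
  rw [hadj, ← Module.End.mul_eq_comp,
    hf.sum_smul_mul_sum_smul_inv (χ α) ρ (ρ.sum_eq_zero_of_irreducible hirr.2 hρ), map_nsmul,
    LinearMap.trace_one, nsmul_eq_mul]
end

section
/- Let G and H be finite groups. A function f: G → H is perfect nonlinear if and only if for every irreducible unitary representation ρ: G → U(V), every nontrivial irreducible unitary representation ρ': H → U(W), and all indices i, j ∈ {1,…,dim W}, we have Σ_{k=1}^{dim W} T_{ik} ∘ (T_{jk})* = |G|·Id_V if i = j and = 0 if i ≠ j, where T_{ik} = Σ_{x∈G} ρ'_{ik}(f(x)) ρ(x). -/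
/-!
Expanding the products and using unitarity (`ρ(y)* = ρ(y⁻¹)` and
`∑ₖ ρ'ᵢₖ(a) conj ρ'ⱼₖ(b) = ρ'ᵢⱼ(a b⁻¹)`) gives `∑ₖ T_ik T_jk* = ∑_α ⟪bᵢ, S_α bⱼ⟫ ρ(α)` with
`S_α = ∑_y ρ'(f(α y) f(y)⁻¹)`, and `S₁ = |G| • Id`.

Since `∑_h ρ'(h) = 0` for nontrivial irreducible `ρ'`, a map `D : X → H` is balanced iff
`∑_x ρ'(D x) = 0` for all such `ρ'`: conversely, the fibre sizes minus their mean `|X|/|H|`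
are then annihilated by every irreducible unitary representation of `H`. A function `c` on a
finite group with `∑_g c(g) ρ(g) = 0` for all irreducible unitary `ρ` vanishes, because the
regular representation `λ` is an orthogonal sum of irreducibles and `(∑_g c(g) λ(g)) δ₁ = c`.
Hence the identity holds for all `ρ` iff `S_α = 0` for all `α ≠ 1`, i.e. iff every derivative
`x ↦ f(α x) f(x)⁻¹` is balanced.
-/

open scoped InnerProductSpace ComplexConjugate

namespace Representation

section Definitions

variable {K V : Type} [Group K]

def IsUnitary [NormedAddCommGroup V] [InnerProductSpace ℂ V] (ρ : Representation ℂ K V) : Prop :=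
  ∀ (g : K) (u v : V), ⟪ρ g u, ρ g v⟫_ℂ = ⟪u, v⟫_ℂ

def HasOnlyTrivialInvariantSubmodules [AddCommGroup V] [Module ℂ V]
    (ρ : Representation ℂ K V) : Prop :=
  ∀ U : Submodule ℂ V, (∀ (g : K) (v : V), v ∈ U → ρ g v ∈ U) → U = ⊥ ∨ U = ⊤

end Definitions

theorem sum_eq_zero_of_hasOnlyTrivialInvariantSubmodules {K W : Type} [Group K] [Fintype K]
    [AddCommGroup W] [Module ℂ W] {ρ : Representation ℂ K W}
    (hρ : ρ.HasOnlyTrivialInvariantSubmodules) (hne : ρ ≠ 1) :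
    ∑ g : K, ρ g = 0 := by
  set P : W →ₗ[ℂ] W := ∑ g : K, ρ g
  have hP : ∀ g : K, ρ g * P = P := fun g => by
    rw [Finset.mul_sum]
    exact Fintype.sum_equiv (Equiv.mulLeft g) _ _ fun h => (map_mul ρ g h).symm
  have hinv : ∀ (g : K) (w : W), w ∈ LinearMap.range P → ρ g w ∈ LinearMap.range P := by
    rintro g _ ⟨v, rfl⟩
    exact ⟨v, by rw [← Module.End.mul_apply, hP]⟩
  rcases hρ (LinearMap.range P) hinv with hbot | htop
  · exact LinearMap.range_eq_bot.1 hbot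
  · refine absurd (MonoidHom.ext fun g => LinearMap.ext fun w => ?_) hne
    obtain ⟨v, rfl⟩ : w ∈ LinearMap.range P := htop ▸ Submodule.mem_top
    rw [← Module.End.mul_apply, hP]
    rfl

namespace IsUnitary

variable {K V : Type} [Group K] [NormedAddCommGroup V] [InnerProductSpace ℂ V]
  {ρ : Representation ℂ K V}

theorem inner_apply_left (hρ : ρ.IsUnitary) (g : K) (u v : V) :
    ⟪ρ g u, v⟫_ℂ = ⟪u, ρ g⁻¹ v⟫_ℂ := by
  rw [← hρ g u, ← Module.End.mul_apply, ← map_mul, mul_inv_cancel, map_one, Module.End.one_apply]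

theorem adjoint_eq [FiniteDimensional ℂ V] (hρ : ρ.IsUnitary) (g : K) :
    LinearMap.adjoint (ρ g) = ρ g⁻¹ :=
  ((LinearMap.eq_adjoint_iff _ _).2 fun u v => by rw [hρ.inner_apply_left, inv_inv]).symm

theorem orthogonal_invariant (hρ : ρ.IsUnitary) {U : Submodule ℂ V}
    (hU : ∀ (g : K) (v : V), v ∈ U → ρ g v ∈ U) (g : K) (v : V) (hv : v ∈ Uᗮ) :
    ρ g v ∈ Uᗮ := fun u hu => by
  rw [← inv_inv g, ← hρ.inner_apply_left]
  exact hv _ (hU _ u hu)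

theorem subrepresentation (hρ : ρ.IsUnitary) (U : Submodule ℂ V)
    (hU : ∀ g, U ≤ U.comap (ρ g)) : (ρ.subrepresentation U hU).IsUnitary :=
  fun g u v => hρ g u v

theorem sum_inner_mul_conj_inner (hρ : ρ.IsUnitary) {ι : Type} [Fintype ι]
    (b : OrthonormalBasis ι ℂ V) (i j : ι) (g₁ g₂ : K) :
    ∑ k, ⟪b i, ρ g₁ (b k)⟫_ℂ * conj ⟪b j, ρ g₂ (b k)⟫_ℂ = ⟪b i, ρ (g₁ * g₂⁻¹) (b j)⟫_ℂ := by
  have h₁ : ∀ k, ⟪b i, ρ g₁ (b k)⟫_ℂ = ⟪ρ g₁⁻¹ (b i), b k⟫_ℂ := fun k => by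
    rw [hρ.inner_apply_left, inv_inv]
  have h₂ : ∀ k, conj ⟪b j, ρ g₂ (b k)⟫_ℂ = ⟪b k, ρ g₂⁻¹ (b j)⟫_ℂ := fun k => by
    rw [← hρ.inner_apply_left, inner_conj_symm]
  simp only [h₁, h₂, b.sum_inner_mul_inner]
  rw [hρ.inner_apply_left, inv_inv, ← Module.End.mul_apply, ← map_mul]

end IsUnitary

section Decomposition

variable {K : Type} [Group K] [Fintype K] (c : K → ℂ)

theorem sum_smul_apply_eq_zero_of_mem {V : Type} [AddCommGroup V] [Module ℂ V]
    (ρ : Representation ℂ K V) {U : Submodule ℂ V} (hU : ∀ g, U ≤ U.comap (ρ g))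
    (h : ∑ g, c g • ρ.subrepresentation U hU g = 0) {u : V} (hu : u ∈ U) :
    (∑ g, c g • ρ g) u = 0 := by
  simpa using congrArg (fun A => (A ⟨u, hu⟩ : V)) h

theorem IsUnitary.sum_smul_eq_zero_of_forall_irreducible
    (hc : ∀ (V : Type) [NormedAddCommGroup V] [InnerProductSpace ℂ V] [FiniteDimensional ℂ V]
      (ρ : Representation ℂ K V), (Nontrivial V ∧ ρ.HasOnlyTrivialInvariantSubmodules) →
      ρ.IsUnitary → ∑ g, c g • ρ g = 0)
    {V : Type} [NormedAddCommGroup V] [InnerProductSpace ℂ V] [FiniteDimensional ℂ V]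
    {ρ : Representation ℂ K V} (hρ : ρ.IsUnitary) : ∑ g, c g • ρ g = 0 := by
  induction hn : Module.finrank ℂ V using Nat.strong_induction_on generalizing V with
  | _ n ih =>
  rcases subsingleton_or_nontrivial V with hV | hV
  · exact Subsingleton.elim _ _
  by_cases hirr : ρ.HasOnlyTrivialInvariantSubmodules
  · exact hc V ρ ⟨hV, hirr⟩ hρ
  obtain ⟨U, hU, hUbot, hUtop⟩ : ∃ U : Submodule ℂ V, (∀ (g : K) (v : V), v ∈ U → ρ g v ∈ U) ∧
      U ≠ ⊥ ∧ U ≠ ⊤ := by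
    simpa [HasOnlyTrivialInvariantSubmodules, not_or] using hirr
  have hUc := hρ.orthogonal_invariant hU
  have hdimU : Module.finrank ℂ U < n := hn ▸ Submodule.finrank_lt hUtop
  have hdimUc : Module.finrank ℂ Uᗮ < n := by
    have := Submodule.finrank_add_finrank_orthogonal U
    have := Submodule.finrank_eq_zero.not.2 hUbot
    omega
  refine LinearMap.ext fun v => ?_
  obtain ⟨u, hu, w, hw, rfl⟩ := U.exists_add_mem_mem_orthogonal v
  rw [map_add, LinearMap.zero_apply,
    sum_smul_apply_eq_zero_of_mem c ρ hU (ih _ hdimU (hρ.subrepresentation U hU) rfl) hu,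
    sum_smul_apply_eq_zero_of_mem c ρ hUc (ih _ hdimUc (hρ.subrepresentation _ hUc) rfl) hw,
    add_zero]

end Decomposition

section Regular

variable (K : Type) [Group K]

noncomputable def leftRegularL2 : Representation ℂ K (EuclideanSpace ℂ K) where
  toFun g :=
    { toFun := fun v => WithLp.toLp 2 fun x => v (g⁻¹ * x)
      map_add' := fun _ _ => rfl
      map_smul' := fun _ _ => rfl }
  map_one' := by ext v x; simp
  map_mul' g h := by ext v x; simp [mul_assoc]; rfl

variable {K}

@[simp]
theorem leftRegularL2_apply (g : K) (v : EuclideanSpace ℂ K) (x : K) :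
    leftRegularL2 K g v x = v (g⁻¹ * x) := rfl

theorem isUnitary_leftRegularL2 [Fintype K] : (leftRegularL2 K).IsUnitary := fun g u v => by
  simp only [PiLp.inner_apply, leftRegularL2_apply]
  exact Fintype.sum_equiv (Equiv.mulLeft g⁻¹) _ _ fun _ => rfl

theorem eq_zero_of_sum_smul_leftRegularL2_eq_zero [Fintype K] [DecidableEq K] {c : K → ℂ}
    (hc : ∑ g, c g • leftRegularL2 K g = 0) (g : K) : c g = 0 := by
  simpa [inv_mul_eq_one, eq_comm, PiLp.single_apply] using
    congrArg (fun A => A (EuclideanSpace.single 1 1) g) hc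

end Regular

theorem eq_zero_of_forall_irreducible_sum_smul_eq_zero {K : Type} [Group K] [Fintype K]
    {c : K → ℂ}
    (hc : ∀ (V : Type) [NormedAddCommGroup V] [InnerProductSpace ℂ V] [FiniteDimensional ℂ V]
      (ρ : Representation ℂ K V), (Nontrivial V ∧ ρ.HasOnlyTrivialInvariantSubmodules) →
      ρ.IsUnitary → ∑ g, c g • ρ g = 0)
    (g : K) : c g = 0 := by
  classical
  exact eq_zero_of_sum_smul_leftRegularL2_eq_zero
    (isUnitary_leftRegularL2.sum_smul_eq_zero_of_forall_irreducible c hc) g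

end Representation

open Representation

section Balanced

variable {X H : Type} [Fintype X] [Fintype H]

theorem sum_comp_eq_sum_card_fiber_smul {M : Type} [AddCommMonoid M] (D : X → H) (F : H → M) :
    ∑ x, F (D x) = ∑ y, Nat.card {x // D x = y} • F y := by
  classical
  rw [← Fintype.sum_fiberwise D]
  refine Finset.sum_congr rfl fun y _ => ?_
  rw [Fintype.sum_congr _ (fun _ => F y) fun x => by rw [x.2], Finset.sum_const, Finset.card_univ,
    Nat.card_eq_fintype_card]

theorem isBalanced_iff_card_fiber_eq [Nonempty H] {R : Type} [Field R] [CharZero R] (D : X → H) :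
    IsBalanced D ↔ ∀ y, (Nat.card {x // D x = y} : R) = Fintype.card X / Fintype.card H := by
  have hH : (Fintype.card H : R) ≠ 0 := Nat.cast_ne_zero.2 Fintype.card_ne_zero
  refine forall_congr' fun y => ?_
  rw [eq_div_iff hH, ← Nat.cast_mul, Nat.cast_inj]

theorem isBalanced_iff_forall_sum_eq_zero [Group H] (D : X → H) :
    IsBalanced D ↔
      ∀ (W : Type) [NormedAddCommGroup W] [InnerProductSpace ℂ W] [FiniteDimensional ℂ W]
        (ρ : Representation ℂ H W), (Nontrivial W ∧ ρ.HasOnlyTrivialInvariantSubmodules) →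
        ρ.IsUnitary → ρ ≠ 1 → ∑ x, ρ (D x) = 0 := by
  have hfiber : ∀ {W : Type} [AddCommGroup W] [Module ℂ W] (ρ : Representation ℂ H W),
      ∑ x, ρ (D x) = ∑ y, (Nat.card {x // D x = y} : ℂ) • ρ y := fun ρ => by
    simp only [sum_comp_eq_sum_card_fiber_smul D ρ, Nat.cast_smul_eq_nsmul]
  rw [isBalanced_iff_card_fiber_eq (R := ℂ)]
  constructor
  · intro hD W _ _ _ ρ hirr _ hne
    rw [hfiber, Fintype.sum_congr _ _ fun y => by rw [hD y], ← Finset.smul_sum,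
      sum_eq_zero_of_hasOnlyTrivialInvariantSubmodules hirr.2 hne, smul_zero]
  · intro hD y
    refine sub_eq_zero.1 (eq_zero_of_forall_irreducible_sum_smul_eq_zero (c := fun y =>
      (Nat.card {x // D x = y} : ℂ) - Fintype.card X / Fintype.card H) ?_ y)
    intro W _ _ _ ρ hirr hρ
    simp only [sub_smul, Finset.sum_sub_distrib, ← hfiber, ← Finset.smul_sum]
    by_cases hne : ρ = 1
    · have hH : (Fintype.card H : ℂ) ≠ 0 := Nat.cast_ne_zero.2 Fintype.card_ne_zero
      simp only [hne, MonoidHom.one_apply, Finset.sum_const, Finset.card_univ,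
        ← Nat.cast_smul_eq_nsmul ℂ, smul_smul, div_mul_cancel₀ _ hH, sub_self]
    · rw [hD W ρ hirr hρ hne, sum_eq_zero_of_hasOnlyTrivialInvariantSubmodules hirr.2 hne,
        smul_zero, sub_zero]

end Balanced

theorem sum_comp_adjoint_eq_sum_smul {G H V W ι : Type} [Group G] [Fintype G] [Group H]
    [NormedAddCommGroup V] [InnerProductSpace ℂ V] [FiniteDimensional ℂ V]
    [NormedAddCommGroup W] [InnerProductSpace ℂ W] [Fintype ι] (f : G → H)
    {ρ : Representation ℂ G V} (hρ : ρ.IsUnitary) {ρ' : Representation ℂ H W}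
    (hρ' : ρ'.IsUnitary) (b : OrthonormalBasis ι ℂ W) (i j : ι) :
    ∑ k, (∑ x, ⟪b i, ρ' (f x) (b k)⟫_ℂ • ρ x) ∘ₗ
        LinearMap.adjoint (∑ x, ⟪b j, ρ' (f x) (b k)⟫_ℂ • ρ x)
      = ∑ α, ⟪b i, (∑ y, ρ' (f (α * y) * (f y)⁻¹)) (b j)⟫_ℂ • ρ α := by
  calc _ = ∑ x, ∑ y, (∑ k, ⟪b i, ρ' (f x) (b k)⟫_ℂ * conj ⟪b j, ρ' (f y) (b k)⟫_ℂ) •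
        ρ (x * y⁻¹) := by
        simp only [map_sum, map_smulₛₗ, hρ.adjoint_eq, ← Module.End.mul_eq_comp,
          Finset.sum_mul_sum, smul_mul_smul_comm, ← map_mul, Finset.sum_smul]
        rw [Finset.sum_comm]
        exact Finset.sum_congr rfl fun x _ => Finset.sum_comm
    _ = ∑ x, ∑ y, ⟪b i, ρ' (f x * (f y)⁻¹) (b j)⟫_ℂ • ρ (x * y⁻¹) := by
        simp only [hρ'.sum_inner_mul_conj_inner]
    _ = ∑ y, ∑ α, ⟪b i, ρ' (f (α * y) * (f y)⁻¹) (b j)⟫_ℂ • ρ α := by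
        rw [Finset.sum_comm]
        exact Finset.sum_congr rfl fun y _ => Fintype.sum_equiv (Equiv.mulRight y⁻¹) _ _
          fun x => by simp
    _ = _ := by
        rw [Finset.sum_comm]
        simp only [LinearMap.sum_apply, inner_sum, Finset.sum_smul]

theorem sum_comp_adjoint_eq_ite_add {G H V W ι : Type} [Group G] [Fintype G] [Group H]
    [NormedAddCommGroup V] [InnerProductSpace ℂ V] [FiniteDimensional ℂ V]
    [NormedAddCommGroup W] [InnerProductSpace ℂ W] [Fintype ι] [DecidableEq G] [DecidableEq ι]
    (f : G → H)
    {ρ : Representation ℂ G V} (hρ : ρ.IsUnitary) {ρ' : Representation ℂ H W}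
    (hρ' : ρ'.IsUnitary) (b : OrthonormalBasis ι ℂ W) (i j : ι) :
    ∑ k, (∑ x, ⟪b i, ρ' (f x) (b k)⟫_ℂ • ρ x) ∘ₗ
        LinearMap.adjoint (∑ x, ⟪b j, ρ' (f x) (b k)⟫_ℂ • ρ x)
      = (if i = j then (Fintype.card G : ℂ) • LinearMap.id else 0) +
        ∑ α, (if α = 1 then 0 else ⟪b i, (∑ y, ρ' (f (α * y) * (f y)⁻¹)) (b j)⟫_ℂ) • ρ α := by
  set a : G → ℂ := fun α => ⟪b i, (∑ y, ρ' (f (α * y) * (f y)⁻¹)) (b j)⟫_ℂ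
  have ha : a 1 = if i = j then (Fintype.card G : ℂ) else 0 := by
    simp [a, orthonormal_iff_ite.1 b.orthonormal]
  have hsplit : ∀ α, a α • ρ α =
      (if α = 1 then a 1 • ρ 1 else 0) + (if α = 1 then 0 else a α) • ρ α := fun α => by
    split_ifs with h <;> simp [h]
  rw [sum_comp_adjoint_eq_sum_smul f hρ hρ' b i j, Fintype.sum_congr _ _ hsplit,
    Finset.sum_add_distrib, Fintype.sum_ite_eq', ha, map_one, Module.End.one_eq_id]
  congr 1
  split_ifs <;> simp

theorem stmt18 {G H : Type} [Group G] [Fintype G] [Group H] [Fintype H]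
    (f : G → H) :
    IsPerfectNonlinear f ↔
      ∀ (V : Type) [NormedAddCommGroup V] [InnerProductSpace ℂ V] [FiniteDimensional ℂ V]
        (W : Type) [NormedAddCommGroup W] [InnerProductSpace ℂ W] [FiniteDimensional ℂ W]
        (ρ : Representation ℂ G V),
        (Nontrivial V ∧
          ∀ U : Submodule ℂ V, (∀ (g : G) (v : V), v ∈ U → ρ g v ∈ U) → U = ⊥ ∨ U = ⊤) →
        (∀ (g : G) (u v : V), (inner ℂ (ρ g u) (ρ g v) : ℂ) = inner ℂ u v) →
        ∀ (ρ' : Representation ℂ H W),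
        (Nontrivial W ∧
          ∀ U : Submodule ℂ W, (∀ (h : H) (w : W), w ∈ U → ρ' h w ∈ U) → U = ⊥ ∨ U = ⊤) →
        (∀ (h : H) (u v : W), (inner ℂ (ρ' h u) (ρ' h v) : ℂ) = inner ℂ u v) →
        ρ' ≠ 1 →
        ∀ {n : ℕ} (b : OrthonormalBasis (Fin n) ℂ W) (i j : Fin n),
          (∑ k : Fin n,
              (∑ x : G, (inner ℂ (b i) (ρ' (f x) (b k)) : ℂ) • ρ x) ∘ₗ
                LinearMap.adjoint (∑ x : G, (inner ℂ (b j) (ρ' (f x) (b k)) : ℂ) • ρ x))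
            = if i = j then (Fintype.card G : ℂ) • (LinearMap.id : V →ₗ[ℂ] V) else 0 := by
  classical
  constructor
  · intro hPN V _ _ _ W _ _ _ ρ _ hρ ρ' hρ'irr hρ' hne n b i j
    rw [sum_comp_adjoint_eq_ite_add f hρ hρ' b i j, add_eq_left]
    refine Finset.sum_eq_zero fun α _ => ?_
    split_ifs with hα
    · exact zero_smul ℂ _
    · rw [(isBalanced_iff_forall_sum_eq_zero _).1 (hPN α hα) W ρ' hρ'irr hρ' hne,
        LinearMap.zero_apply, inner_zero_right, zero_smul]
  · intro h α hα
    refine (isBalanced_iff_forall_sum_eq_zero _).2 fun W _ _ _ ρ' hρ'irr hρ' hne => ?_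
    let b := stdOrthonormalBasis ℂ W
    refine b.toBasis.ext fun j => InnerProductSpace.ext_inner_left_basis b.toBasis fun i => ?_
    have hc := eq_zero_of_forall_irreducible_sum_smul_eq_zero (c := fun β => if β = 1 then 0
      else ⟪b i, (∑ y, ρ' (f (β * y) * (f y)⁻¹)) (b j)⟫_ℂ) (fun V _ _ _ ρ hρirr hρ => by
        have := h V W ρ hρirr hρ ρ' hρ'irr hρ' hne b i j
        rwa [sum_comp_adjoint_eq_ite_add f hρ hρ' b i j, add_eq_left] at this) α
    simpa [hα, inner_sum] using hc
end
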